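/- Under the PART 3 setup, let R_{-i} ∈ ∏_{j≠i} 𝓡_j be a subprofile such that O_i(R_{-i}, 𝓡'_i) ≠ O_i(R_{-i}, 𝓡_i). If there exist an agent j ≠ i and a preference R̂_j ∈ 𝓡_j with O_i((R̂_j, R_{-{i,j}}), 𝓡'_i) = {x, z}, then {y, z} ∈ S^{-1}(𝓡'_i). -/

import Mathlib

/-- A preference is represented by its strict relation `P`, where `P a b` means
`a` is strictly preferred to `b`. -/
abbrev Pref (X : Type*) := X → X → Prop

/-- The universal domain: all strict linear orders (strict total orders) on `X`. -/
def univDomain (X : Type*) : Set (Pref X) := {P | IsStrictTotalOrder X P}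

/-- `S(𝓑)`: the set of ordered pairs of distinct alternatives that are fixed
(ranked the same way) throughout the domain `𝓑`. -/
def fixedPairs {X : Type*} (B : Set (Pref X)) : Set (X × X) :=
  {p | p.1 ≠ p.2 ∧ ∀ P ∈ B, P p.1 p.2}

/-- A preference domain is non-conditional if it consists exactly of the strict
linear orders respecting all of its fixed pairs. -/
def NonConditional {X : Type*} (B : Set (Pref X)) : Prop :=
  B = {P | P ∈ univDomain X ∧ ∀ p ∈ fixedPairs B, P p.1 p.2}

/-- `{x, y} ∈ S⁻¹(𝓑)`: the unordered pair `{x, y}` is a free pair of `𝓑`. -/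
def FreePair {X : Type*} (B : Set (Pref X)) (x y : X) : Prop :=
  x ≠ y ∧ (x, y) ∉ fixedPairs B ∧ (y, x) ∉ fixedPairs B

/-- The profile `R` lies in the product domain `∏ i, 𝓡 i`. -/
def InDomain {N X : Type*} (𝓡 : N → Set (Pref X)) (R : N → Pref X) : Prop :=
  ∀ i, R i ∈ 𝓡 i

/-- The range `r(f)` of a social choice rule `f` over the domain `𝓡`. -/
def scrRange {N X : Type*} (𝓡 : N → Set (Pref X)) (f : (N → Pref X) → X) : Set X :=
  {x | ∃ R, InDomain 𝓡 R ∧ f R = x}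

/-- Strategy-proofness of `f` on the product domain `𝓡`: no agent `i` can, at any
profile of the domain, obtain a strictly preferred outcome by misreporting. -/
def StrategyProof {N X : Type*} [DecidableEq N] (𝓡 : N → Set (Pref X))
    (f : (N → Pref X) → X) : Prop :=
  ∀ R, InDomain 𝓡 R → ∀ i, ∀ P' ∈ 𝓡 i, ¬ R i (f (Function.update R i P')) (f R)

/-- `f` is a dictatorship of agent `i` on the domain `𝓡`: at every profile of the
domain, `f` selects an outcome weakly preferred by `i` to every element of the range. -/
def Dictatorship {N X : Type*} (𝓡 : N → Set (Pref X)) (f : (N → Pref X) → X)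
    (i : N) : Prop :=
  ∀ R, InDomain 𝓡 R → ∀ x ∈ scrRange 𝓡 f, f R = x ∨ R i (f R) x

/-- `f` is non-dictatorial on the domain `𝓡`. -/
def NonDictatorial {N X : Type*} (𝓡 : N → Set (Pref X)) (f : (N → Pref X) → X) : Prop :=
  ∀ i, ¬ Dictatorship 𝓡 f i

/-- The option set `O_i(R_{-i}, 𝓑)` of agent `i` at the subprofile `R_{-i}`
relative to the set of preferences `𝓑`. -/
def optionSet {N X : Type*} [DecidableEq N] (f : (N → Pref X) → X) (i : N)
    (R : N → Pref X) (B : Set (Pref X)) : Set X :=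
  {x | ∃ P ∈ B, f (Function.update R i P) = x}

/-!
Both `x` and `z` are options of agent `i` at `(R̂_j, R_{-i,j})`, so strategy-proofness forbids
fixing either order of `{x, z}` in `𝓡'_i`; as `x` is fixed above `y`, `(y, z)` cannot be fixed
either. If `(z, y)` were fixed, it would stay fixed in `𝓡_i`, and the option of `i` at `R_{-i}`
gained in passing from `𝓡'_i` to `𝓡_i` is then `y`, reached by some `P` ranking `z > y > x`.
Strategy-proofness pins down the outcomes of `R_j` and `R̂_j` against `P` and against a
`Q ∈ 𝓡'_i` ranking `z` over `x`; this frees enough pairs for agent `j` that, by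
non-conditionality, `𝓡_j` contains a preference ranking `x > z > y` (if `(x, y)` is fixed for
`j`) or `y > z > x` (otherwise), and no outcome at it is compatible with strategy-proofness.
-/

open Function

section Relations

variable {α : Type*}

lemma isPartialOrder_adjoin (r : α → α → Prop) [IsPartialOrder α r] {a b : α} (hba : ¬ r b a) :
    IsPartialOrder α (fun u v => r u v ∨ r u a ∧ r b v) where
  refl u := Or.inl (refl u)
  trans u m v := by
    rintro (hum | ⟨hua, hbm⟩) (hmv | ⟨hma, hbv⟩)
    · exact Or.inl (_root_.trans hum hmv)
    · exact Or.inr ⟨_root_.trans hum hma, hbv⟩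
    · exact Or.inr ⟨hua, _root_.trans hbm hmv⟩
    · exact absurd (_root_.trans hbm hma) hba
  antisymm u v := by
    rintro (huv | ⟨hua, hbv⟩) (hvu | ⟨hva, hbu⟩)
    · exact antisymm huv hvu
    · exact absurd (_root_.trans hbu (_root_.trans huv hva)) hba
    · exact absurd (_root_.trans hbv (_root_.trans hvu hua)) hba
    · exact absurd (_root_.trans hbv hva) hba

/-- Szpilrajn's theorem, strict form: `¬ s v u` for a linear extension `s` of `r`. -/
lemma exists_isStrictTotalOrder_extension (r : α → α → Prop) [IsPartialOrder α r] :
    ∃ P, IsStrictTotalOrder α P ∧ ∀ u v, r u v → u ≠ v → P u v := by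
  obtain ⟨s, hs, hrs⟩ := extend_partialOrder r
  refine ⟨fun u v => ¬ s v u, ?_, fun u v huv hne hvu => hne (antisymm (hrs u v huv) hvu)⟩
  refine { trichotomous := ?_, irrefl := fun u h => h (refl u), trans := ?_ }
  · intro u v hvu huv
    exact antisymm (not_not.mp huv) (not_not.mp hvu)
  · intro u m v hmu hvm hvu
    rcases total_of s u m with hum | hmu'
    · exact hvm (_root_.trans hvu hum)
    · exact hmu hmu'

end Relations

section Domains

variable {X : Type*}

lemma rel_of_not_rel {P : Pref X} (hP : P ∈ univDomain X) {u v : X} (huv : u ≠ v)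
    (h : ¬ P v u) : P u v :=
  not_not.mp fun h' => huv (hP.trichotomous u v h' h)

lemma notMem_fixedPairs_of_rel {B : Set (Pref X)} (hB : B ⊆ univDomain X) {P : Pref X}
    (hP : P ∈ B) {u v : X} (h : P v u) : (u, v) ∉ fixedPairs B := by
  have : IsStrictTotalOrder X P := hB hP
  exact fun huv => asymm h (huv.2 P hP)

lemma exists_rel_of_notMem_fixedPairs {B : Set (Pref X)} (hB : B ⊆ univDomain X) {u v : X}
    (huv : u ≠ v) (h : (v, u) ∉ fixedPairs B) : ∃ P ∈ B, P u v := by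
  by_contra! hcon
  exact h ⟨huv.symm, fun P hP => rel_of_not_rel (hB hP) huv.symm (hcon P hP)⟩

lemma NonConditional.subset_univDomain {B : Set (Pref X)} (hB : NonConditional B) :
    B ⊆ univDomain X :=
  fun _ hP => (hB.subset hP).1

def unanimity (B : Set (Pref X)) (u v : X) : Prop :=
  ∀ P ∈ B, u = v ∨ P u v

lemma isPartialOrder_unanimity {B : Set (Pref X)} (hB : B ⊆ univDomain X) (hne : B.Nonempty) :
    IsPartialOrder X (unanimity B) where
  refl _ _ _ := Or.inl rfl
  trans u m v hum hmv P hP := by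
    have : IsStrictTotalOrder X P := hB hP
    rcases hum P hP with rfl | hum
    · exact hmv P hP
    · rcases hmv P hP with rfl | hmv
      · exact Or.inr hum
      · exact Or.inr (_root_.trans hum hmv)
  antisymm u v huv hvu := by
    obtain ⟨P, hP⟩ := hne
    have : IsStrictTotalOrder X P := hB hP
    rcases huv P hP with h | huv
    · exact h
    · exact ((hvu P hP).resolve_right (asymm huv)).symm

lemma unanimity_iff_mem_fixedPairs {B : Set (Pref X)} {u v : X} (huv : u ≠ v) :
    unanimity B u v ↔ (u, v) ∈ fixedPairs B :=
  ⟨fun h => ⟨huv, fun P hP => (h P hP).resolve_left huv⟩, fun h P hP => Or.inr (h.2 P hP)⟩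

lemma NonConditional.exists_rel_rel {B : Set (Pref X)} (hB : NonConditional B)
    (hne : B.Nonempty) {a b c : X} (hab : a ≠ b) (hbc : b ≠ c) (hac : a ≠ c)
    (hba : (b, a) ∉ fixedPairs B) (hcb : (c, b) ∉ fixedPairs B) (hca : (c, a) ∉ fixedPairs B) :
    ∃ P ∈ B, P a b ∧ P b c := by
  have := isPartialOrder_unanimity hB.subset_univDomain hne
  set r := unanimity B
  have hrba : ¬ r b a := fun h => hba ((unanimity_iff_mem_fixedPairs hab.symm).mp h)
  have hrcb : ¬ r c b := fun h => hcb ((unanimity_iff_mem_fixedPairs hbc.symm).mp h)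
  have hrca : ¬ r c a := fun h => hca ((unanimity_iff_mem_fixedPairs hac.symm).mp h)
  have := isPartialOrder_adjoin r hrba
  set r₁ := fun u v => r u v ∨ r u a ∧ r b v
  have := isPartialOrder_adjoin r₁ (a := b) (b := c) (by rintro (h | ⟨h, -⟩) <;> contradiction)
  obtain ⟨P, hP, hext⟩ := exists_isStrictTotalOrder_extension
    (fun u v => r₁ u v ∨ r₁ u b ∧ r₁ c v)
  refine ⟨P, ?_, hext a b (Or.inl (Or.inr ⟨refl a, refl b⟩)) hab,
    hext b c (Or.inr ⟨refl b, refl c⟩) hbc⟩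
  rw [hB]
  refine ⟨hP, fun p hp => hext _ _ (Or.inl (Or.inl ?_)) hp.1⟩
  exact (unanimity_iff_mem_fixedPairs hp.1).mpr hp

end Domains

section TwoAgents

variable {X : Type*} {A B B' : Set (Pref X)} {g : Pref X → Pref X → X}

def StrategyProof₂ (A B : Set (Pref X)) (g : Pref X → Pref X → X) : Prop :=
  (∀ a ∈ A, ∀ a' ∈ A, ∀ b ∈ B, ¬ a (g a' b) (g a b)) ∧
    ∀ b ∈ B, ∀ b' ∈ B, ∀ a ∈ A, ¬ b (g a b') (g a b)

namespace StrategyProof₂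

lemma not_fst (hg : StrategyProof₂ A B g) {a a' b : Pref X} (ha : a ∈ A) (ha' : a' ∈ A)
    (hb : b ∈ B) {u v : X} (hu : g a b = u) (hv : g a' b = v) : ¬ a v u :=
  hu ▸ hv ▸ hg.1 a ha a' ha' b hb

lemma not_snd (hg : StrategyProof₂ A B g) {a b b' : Pref X} (ha : a ∈ A) (hb : b ∈ B)
    (hb' : b' ∈ B) {u v : X} (hu : g a b = u) (hv : g a b' = v) : ¬ b v u :=
  hu ▸ hv ▸ hg.2 b hb b' hb' a ha

lemma notMem_fixedPairs_of_mem_image (hg : StrategyProof₂ A B g) (hB' : B' ⊆ B) {a : Pref X}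
    (ha : a ∈ A) {u v : X} (hu : u ∈ g a '' B') (hv : v ∈ g a '' B') :
    (u, v) ∉ fixedPairs B' := by
  obtain ⟨P, hP, rfl⟩ := hu
  obtain ⟨Q, hQ, rfl⟩ := hv
  exact fun h => hg.not_snd ha (hB' hQ) (hB' hP) rfl rfl (h.2 Q hQ)

lemma mem_image_of_rel (hg : StrategyProof₂ A B g) (hB' : B' ⊆ B) {a P Q : Pref X}
    (ha : a ∈ A) (hP : P ∈ B) (hQ : Q ∈ B') {v : X} (hQv : Q (g a P) v)
    (hgQ : g a Q = g a P ∨ g a Q = v) : g a P ∈ g a '' B' := by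
  rcases hgQ with h | h
  · exact ⟨Q, hQ, h⟩
  · exact absurd hQv (hg.not_snd ha (hB' hQ) hP h rfl)

/-- An outcome attained on `B` but not on `B'` must be `y`: both `x` and `z` are attained on
`B'`, by the preferences `Q` that rank them over the other one. -/
lemma exists_eq_of_image_ne (hg : StrategyProof₂ A B g) (hB' : B' ⊆ B) {a : Pref X}
    (ha : a ∈ A) {x y z : X} (hrg : ∀ b ∈ B, g a b ∈ ({x, y, z} : Set X))
    (hrg' : ∀ b ∈ B', g a b ∈ ({x, z} : Set X)) (hxz : ∃ Q ∈ B', Q x z)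
    (hzx : ∃ Q ∈ B', Q z x) (hne : g a '' B' ≠ g a '' B) : ∃ P ∈ B, g a P = y := by
  obtain ⟨w, ⟨P, hP, rfl⟩, hw⟩ :=
    Set.exists_of_ssubset ((Set.image_mono hB').ssubset_of_ne hne)
  obtain ⟨Qx, hQx, hQxz⟩ := hxz
  obtain ⟨Qz, hQz, hQzx⟩ := hzx
  rcases hrg P hP with hPx | hPy | hPz
  · exact absurd (hg.mem_image_of_rel hB' ha hP hQx (hPx ▸ hQxz)
      (by rw [hPx]; exact hrg' Qx hQx)) (hPx ▸ hw)
  · exact ⟨P, hP, hPy⟩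
  · exact absurd (hg.mem_image_of_rel hB' ha hP hQz (hPz ▸ hQzx)
      (by rw [hPz]; exact (hrg' Qz hQz).symm)) (hPz ▸ hw)

/-- With `P, Q ∈ B` and `r, r' ∈ A`, the outcomes `g r P = y`, `g r Q = x`, `g r' P = g r' Q = z`
force `r` and `r'` to free the pairs needed for a third preference `s ∈ A` ranking `x > z > y`
or `y > z > x`, at which no outcome is compatible with strategy-proofness. -/
lemma false_of_table (hA : NonConditional A) (hg : StrategyProof₂ A B g) {x y z : X}
    (hxy : x ≠ y) (hzx : z ≠ x) (hzy : z ≠ y)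
    (hrg : ∀ a ∈ A, ∀ b ∈ B, g a b ∈ ({x, y, z} : Set X)) {P Q r r' : Pref X}
    (hP : P ∈ B) (hQ : Q ∈ B) (hr : r ∈ A) (hr' : r' ∈ A)
    (hrgQ : ∀ a ∈ A, g a Q ∈ ({x, z} : Set X)) (hPzy : P z y) (hQzx : Q z x)
    (hrP : g r P = y) (hrQ : g r Q = x) (hr'P : g r' P = z) (hr'Q : g r' Q = z) : False := by
  have hAu := hA.subset_univDomain
  have hryz : r y z := rel_of_not_rel (hAu hr) hzy.symm (hg.not_fst hr hr' hP hrP hr'P)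
  have hrxz : r x z := rel_of_not_rel (hAu hr) hzx.symm (hg.not_fst hr hr' hQ hrQ hr'Q)
  have hr'zy : r' z y := rel_of_not_rel (hAu hr') hzy (hg.not_fst hr' hr hP hr'P hrP)
  have hr'zx : r' z x := rel_of_not_rel (hAu hr') hzx (hg.not_fst hr' hr hQ hr'Q hrQ)
  by_cases hxyA : (x, y) ∈ fixedPairs A
  · obtain ⟨s, hs, hsxz, hszy⟩ := hA.exists_rel_rel ⟨r, hr⟩ hzx.symm hzy hxy
      (notMem_fixedPairs_of_rel hAu hr hrxz) (notMem_fixedPairs_of_rel hAu hr' hr'zy)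
      (notMem_fixedPairs_of_rel hAu hr (hxyA.2 r hr))
    rcases hrg s hs P hP with hsP | hsP | hsP
    · exact hg.not_fst hr hs hP hrP hsP (hxyA.2 r hr)
    · exact hg.not_fst hs hr' hP hsP hr'P hszy
    · rcases hrgQ s hs with hsQ | hsQ
      · exact hg.not_snd hs hQ hP hsQ hsP hQzx
      · exact hg.not_fst hs hr hQ hsQ hrQ hsxz
  · obtain ⟨s, hs, hsyz, hszx⟩ := hA.exists_rel_rel ⟨r, hr⟩ hzy.symm hzx hxy.symm
      (notMem_fixedPairs_of_rel hAu hr hryz) (notMem_fixedPairs_of_rel hAu hr' hr'zx) hxyA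
    rcases hrg s hs P hP with hsP | hsP | hsP
    · exact hg.not_fst hs hr' hP hsP hr'P hszx
    · rcases hrgQ s hs with hsQ | hsQ
      · exact hg.not_fst hs hr' hQ hsQ hr'Q hszx
      · exact hg.not_snd hs hP hQ hsP hsQ hPzy
    · exact hg.not_fst hs hr hP hsP hrP hsyz

lemma notMem_fixedPairs_of_image_ne (hA : NonConditional A) (hB : B ⊆ univDomain X)
    (hB' : B' ⊆ B) (hg : StrategyProof₂ A B g) {x y z : X} (hxy : x ≠ y) (hzx : z ≠ x) (hzy : z ≠ y)
    (hrg : ∀ a ∈ A, ∀ b ∈ B, g a b ∈ ({x, y, z} : Set X))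
    (hrg' : ∀ a ∈ A, ∀ b ∈ B', g a b ∈ ({x, z} : Set X)) {r r' : Pref X} (hr : r ∈ A)
    (hr' : r' ∈ A) (hne : g r '' B' ≠ g r '' B) (hr'B' : g r' '' B' = {x, z}) :
    (z, y) ∉ fixedPairs B := by
  intro hzyB
  have hxr' : x ∈ g r' '' B' := hr'B' ▸ Set.mem_insert x {z}
  have hzr' : z ∈ g r' '' B' := hr'B' ▸ Set.mem_insert_of_mem x rfl
  obtain ⟨Qx, hQx, hQxz⟩ := exists_rel_of_notMem_fixedPairs (hB'.trans hB) hzx.symm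
    (hg.notMem_fixedPairs_of_mem_image hB' hr' hzr' hxr')
  obtain ⟨Qz, hQz, hQzx⟩ := exists_rel_of_notMem_fixedPairs (hB'.trans hB) hzx
    (hg.notMem_fixedPairs_of_mem_image hB' hr' hxr' hzr')
  obtain ⟨P, hP, hrP⟩ := hg.exists_eq_of_image_ne hB' hr (hrg r hr) (hrg' r hr)
    ⟨Qx, hQx, hQxz⟩ ⟨Qz, hQz, hQzx⟩ hne
  have hPzy : P z y := hzyB.2 P hP
  obtain ⟨Q₀, hQ₀, hr'Q₀⟩ := hzr'
  have hrB' : ∀ Q ∈ B', g r Q = x := fun Q hQ =>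
    (hrg' r hr Q hQ).resolve_right fun hrQ => hg.not_snd hr hP (hB' hQ) hrP hrQ hPzy
  have : IsStrictTotalOrder X P := hB hP
  have hPyx : P y x :=
    rel_of_not_rel (hB hP) hxy.symm (hg.not_snd hr hP (hB' hQz) hrP (hrB' Qz hQz))
  have hr'P : g r' P = z := by
    rcases hrg r' hr' P hP with h | h | h
    · exact absurd (_root_.trans hPzy hPyx) (hg.not_snd hr' hP (hB' hQ₀) h hr'Q₀)
    · exact absurd hPzy (hg.not_snd hr' hP (hB' hQ₀) h hr'Q₀)
    · exact h
  have hr'Qz : g r' Qz = z := (hrg' r' hr' Qz hQz).resolve_left fun h =>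
    hg.not_snd hr' (hB' hQz) (hB' hQ₀) h hr'Q₀ hQzx
  exact false_of_table hA hg hxy hzx hzy hrg hP (hB' hQz) hr hr' (fun a ha => hrg' a ha Qz hQz)
    hPzy hQzx hrP (hrB' Qz hQz) hr'P hr'Qz

end StrategyProof₂

end TwoAgents

section Profiles

variable {N X : Type*} [DecidableEq N] {𝓡 : N → Set (Pref X)} {R : N → Pref X} {i : N}

lemma inDomain_update (hR : ∀ k, k ≠ i → R k ∈ 𝓡 k) {b : Pref X} (hb : b ∈ 𝓡 i) :
    InDomain 𝓡 (update R i b) := by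
  intro k
  rcases eq_or_ne k i with rfl | hk
  · simpa using hb
  · simpa [hk] using hR k hk

lemma update_mem_of_ne (hR : ∀ k, k ≠ i → R k ∈ 𝓡 k) {j : N} {a : Pref X} (ha : a ∈ 𝓡 j) :
    ∀ k, k ≠ i → update R j a k ∈ 𝓡 k := by
  intro k hk
  rcases eq_or_ne k j with rfl | hkj
  · simpa using ha
  · simpa [hkj] using hR k hk

lemma StrategyProof.strategyProof₂ {f : (N → Pref X) → X} (hSP : StrategyProof 𝓡 f)
    (hR : ∀ k, k ≠ i → R k ∈ 𝓡 k) {j : N} (hji : j ≠ i) :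
    StrategyProof₂ (𝓡 j) (𝓡 i) (fun a b => f (update (update R j a) i b)) := by
  constructor
  · intro a ha a' ha' b hb
    have h := hSP _ (inDomain_update (update_mem_of_ne hR ha) hb) j a' ha'
    simpa [update_comm hji, hji] using h
  · intro b hb b' hb' a ha
    simpa using hSP _ (inDomain_update (update_mem_of_ne hR ha) hb) i b' hb'

end Profiles

theorem statement11_general {N X : Type*} [DecidableEq N]
    (i : N) (𝓡 𝓡' : N → Set (Pref X))
    (hAgree : ∀ j, j ≠ i → 𝓡' j = 𝓡 j)
    (hNC : ∀ j, NonConditional (𝓡 j))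
    (hss : 𝓡' i ⊂ 𝓡 i) (x y : X)
    (hxy : (x, y) ∈ fixedPairs (𝓡' i))
    (hS : fixedPairs (𝓡 i) = fixedPairs (𝓡' i) \ {(x, y)})
    (f : (N → Pref X) → X) (hSP : StrategyProof 𝓡 f)
    (z : X) (hzx : z ≠ x) (hzy : z ≠ y)
    (hrange' : scrRange 𝓡' f = {x, z})
    (hrange : scrRange 𝓡 f = {x, y, z}) :
    ∀ R : N → Pref X, (∀ j, j ≠ i → R j ∈ 𝓡 j) →
      optionSet f i R (𝓡' i) ≠ optionSet f i R (𝓡 i) →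
      ∀ j, j ≠ i → ∀ Rhat ∈ 𝓡 j,
        optionSet f i (Function.update R j Rhat) (𝓡' i) = {x, z} →
        FreePair (𝓡' i) y z := by
  intro R hR hO j hji Rhat hRhat hhat
  set g := fun a b => f (update (update R j a) i b)
  have hg : StrategyProof₂ (𝓡 j) (𝓡 i) g := hSP.strategyProof₂ hR hji
  have hB : 𝓡 i ⊆ univDomain X := (hNC i).subset_univDomain
  have hrg : ∀ a ∈ 𝓡 j, ∀ b ∈ 𝓡 i, g a b ∈ ({x, y, z} : Set X) := fun a ha b hb =>
    hrange ▸ ⟨_, inDomain_update (update_mem_of_ne hR ha) hb, rfl⟩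
  have hrg' : ∀ a ∈ 𝓡 j, ∀ b ∈ 𝓡' i, g a b ∈ ({x, z} : Set X) := fun a ha b hb =>
    hrange' ▸ ⟨_, inDomain_update (fun k hk => hAgree k hk ▸ update_mem_of_ne hR ha k hk) hb,
      rfl⟩
  have hne : g (R j) '' 𝓡' i ≠ g (R j) '' 𝓡 i := by
    simp only [g, update_eq_self]
    exact hO
  have hhat : g Rhat '' 𝓡' i = {x, z} := hhat
  have hxz : (x, z) ∉ fixedPairs (𝓡' i) := hg.notMem_fixedPairs_of_mem_image hss.subset hRhat
    (hhat ▸ Set.mem_insert x {z}) (hhat ▸ Set.mem_insert_of_mem x rfl)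
  refine ⟨hzy.symm, fun hyz => hxz ⟨hzx.symm, fun P hP => ?_⟩, fun hzy' => ?_⟩
  · have : IsStrictTotalOrder X P := hB (hss.subset hP)
    exact _root_.trans (hxy.2 P hP) (hyz.2 P hP)
  · refine hg.notMem_fixedPairs_of_image_ne (hNC j) hB hss.subset hxy.1 hzx hzy hrg hrg'
      (hR j hji) hRhat hne hhat ?_
    exact hS ▸ ⟨hzy', by simp [hzx]⟩

theorem statement11 {N X : Type*} [Fintype N] [Nonempty N] [Fintype X] [DecidableEq N]
    (i : N) (𝓡 𝓡' : N → Set (Pref X))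
    (hAgree : ∀ j, j ≠ i → 𝓡' j = 𝓡 j)
    (hNC : ∀ j, NonConditional (𝓡 j)) (hNC' : NonConditional (𝓡' i))
    (hss : 𝓡' i ⊂ 𝓡 i) (x y : X)
    (hxy : (x, y) ∈ fixedPairs (𝓡' i))
    (hS : fixedPairs (𝓡 i) = fixedPairs (𝓡' i) \ {(x, y)})
    (hnoz : ¬ ∃ z, (x, z) ∈ fixedPairs (𝓡' i) ∧ (z, y) ∈ fixedPairs (𝓡' i))
    (f : (N → Pref X) → X) (hSP : StrategyProof 𝓡 f)
    (z : X) (hzx : z ≠ x) (hzy : z ≠ y)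
    (hrange' : scrRange 𝓡' f = {x, z})
    (hrange : scrRange 𝓡 f = {x, y, z}) :
    ∀ R : N → Pref X, (∀ j, j ≠ i → R j ∈ 𝓡 j) →
      optionSet f i R (𝓡' i) ≠ optionSet f i R (𝓡 i) →
      ∀ j, j ≠ i → ∀ Rhat ∈ 𝓡 j,
        optionSet f i (Function.update R j Rhat) (𝓡' i) = {x, z} →
        FreePair (𝓡' i) y z :=
  statement11_general i 𝓡 𝓡' hAgree hNC hss x y hxy hS f hSP z hzx hzy hrange' hrange
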